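/- Let m = 2^β be a power of 2, let k be a multiple of β + 1, and set n = (2m − 1)·k/(β + 1). Suppose A ∈ ℕ is such that every set of n points in ℝ² in general position admits a k-partition with crossing number at most A. Then there exists a multi-coloring of the nodes of the complete binary tree T of height β with the following properties: (i) every node is assigned a multiset of exactly k/(β + 1) colors; (ii) each color class has size at most k; (iii) along each root-leaf path of T at most A + 1 distinct colors appear. -/

import Mathlib

open scoped Classical

noncomputable section

/-- A planar point set is in general position if no three distinct points are collinear. -/
def GenPos2 (P : Finset (ℝ × ℝ)) : Prop :=
  ∀ p ∈ P, ∀ q ∈ P, ∀ r ∈ P, p ≠ q → q ≠ r → p ≠ r →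
    ¬ Collinear ℝ ({p, q, r} : Set (ℝ × ℝ))

/-- The triangle (convex hull) spanned by three points. -/
def triangle (t : Fin 3 → ℝ × ℝ) : Set (ℝ × ℝ) :=
  convexHull ℝ {t 0, t 1, t 2}

/-- The non-vertical line `y = a*x + b`, as a set of points. -/
def lineSet (a b : ℝ) : Set (ℝ × ℝ) := {p | p.2 = a * p.1 + b}

/-- The open halfplane strictly below the line `y = a*x + b`. -/
def belowSet (a b : ℝ) : Set (ℝ × ℝ) := {p | p.2 < a * p.1 + b}

/-- A `k`-partition of an `n`-point set `P` : pairwise disjoint parts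
`P_1, …, P_⌈n/k⌉` covering `P`, where the first `⌊n/k⌋` parts have size
exactly `k`, together with triangles containing the parts.
(Here `⌈n/k⌉ = (n + k - 1) / k` in natural-number arithmetic, and the
parts are indexed by `i = 0, …, ⌈n/k⌉ - 1`, the first `⌊n/k⌋ = n / k`
of them having size `k`.) -/
structure IsKPartition (P : Finset (ℝ × ℝ)) (n k : ℕ)
    (parts : Fin ((n + k - 1) / k) → Finset (ℝ × ℝ))
    (tri : Fin ((n + k - 1) / k) → Fin 3 → ℝ × ℝ) : Prop where
  disjoint : ∀ i j, i ≠ j → Disjoint (parts i) (parts j)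
  cover : Finset.univ.biUnion parts = P
  size : ∀ i : Fin ((n + k - 1) / k), (i : ℕ) < n / k → (parts i).card = k
  inTriangle : ∀ i, ↑(parts i) ⊆ triangle (tri i)

/-- The line `y = a*x + b` is `k`-shallow for `P` : it contains no point of `P`
and at most `k` points of `P` lie strictly below it. -/
def IsShallow (P : Finset (ℝ × ℝ)) (k : ℕ) (a b : ℝ) : Prop :=
  (∀ p ∈ P, p ∉ lineSet a b) ∧ (P.filter (fun p => p ∈ belowSet a b)).card ≤ k

/-- The number of triangles of the partition that the line `y = a*x + b` intersects. -/
def crossCount {N : ℕ} (tri : Fin N → Fin 3 → ℝ × ℝ) (a b : ℝ) : ℕ :=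
  (Finset.univ.filter fun i => (lineSet a b ∩ triangle (tri i)).Nonempty).card

/-- The nodes of the complete binary tree of height `β`, in heap indexing:
the `2^(β+1) - 1` numbers `1, …, 2^(β+1) - 1`.  The root is `1`, the children
of node `v` are `2*v` and `2*v + 1`, and the level of node `v` is `log₂ v`. -/
def treeNodes (β : ℕ) : Finset ℕ := Finset.Ico 1 (2 ^ (β + 1))

/-- The leaves of the complete binary tree of height `β`: the `2^β` nodes on
level `β`. -/
def treeLeaves (β : ℕ) : Finset ℕ := Finset.Ico (2 ^ β) (2 ^ (β + 1))

/-- Given a multi-coloring `c` of the nodes (each node gets a multiset of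
colors) and a leaf `l`, the set of distinct colors appearing along the
root-leaf path to `l`; the path consists of the ancestors `l / 2^t` of `l`. -/
def pathColors (β : ℕ) (c : ℕ → Multiset ℕ) (l : ℕ) : Finset ℕ :=
  (Finset.range (β + 1)).biUnion fun t => (c (l / 2 ^ t)).toFinset


/-!
Give node `v` of level `d` the point `(x, x² - w²)` with `w = 2^(β - d)` and `x = 2vw + w - 1`.
The leaves below `v` form the interval `[vw, vw + w)`, and the point lies below the tangent to
`y = x²` at `x = 2l` exactly when `|x - 2l| < w`, i.e. when `v` is an ancestor of the leaf `l`.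
These conditions are open, so replacing every node point by `k/(β+1)` nearby points in general
position gives an `n`-point set in which the tangent of each leaf has exactly the points of its
root-leaf path below it, at most `k` of them. Color each node by the indices of the parts
containing its points. A color class lies in one part, so it has at most `k` elements. A color
on the path of `l` is a part with a point below the tangent of `l`; such a part is either crossed
by the tangent, or lies entirely below it, and the latter happens for at most one part.
-/

lemma Collinear.cross_eq {p q r : ℝ × ℝ} (h : Collinear ℝ ({p, q, r} : Set (ℝ × ℝ))) :
    (q.1 - p.1) * (r.2 - p.2) = (r.1 - p.1) * (q.2 - p.2) := by
  obtain ⟨v, hv⟩ := (collinear_iff_of_mem (Set.mem_insert p {q, r})).1 h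
  obtain ⟨cq, rfl⟩ := hv q (by simp)
  obtain ⟨cr, rfl⟩ := hv r (by simp)
  simp
  ring

lemma genPos2_insert {S : Finset (ℝ × ℝ)} {z : ℝ × ℝ} (hS : GenPos2 S)
    (hz : ∀ p ∈ S, ∀ q ∈ S, p ≠ q → ¬ Collinear ℝ ({p, q, z} : Set (ℝ × ℝ))) :
    GenPos2 (insert z S) := by
  intro p hp q hq r hr hpq hqr hpr
  rw [Finset.mem_insert] at hp hq hr
  rcases hp with rfl | hp <;> rcases hq with rfl | hq <;> rcases hr with rfl | hr
  · exact absurd rfl hpq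
  · exact absurd rfl hpq
  · exact absurd rfl hpr
  · rw [Set.insert_comm, Set.pair_comm]; exact hz _ hq _ hr hqr
  · exact absurd rfl hqr
  · rw [Set.pair_comm]; exact hz _ hp _ hr hpr
  · exact hz _ hp _ hq hpq
  · exact hS _ hp _ hq _ hr hpq hqr hpr

lemma IsOpen.exists_mem_not_collinear {U : Set (ℝ × ℝ)} (hU : IsOpen U) (hne : U.Nonempty)
    (S : Finset (ℝ × ℝ)) :
    ∃ z ∈ U, (∀ p ∈ S, p.1 ≠ z.1) ∧
      ∀ p ∈ S, ∀ q ∈ S, p.1 ≠ q.1 → ¬ Collinear ℝ ({p, q, z} : Set (ℝ × ℝ)) := by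
  obtain ⟨⟨c₁, c₂⟩, hc⟩ := hne
  obtain ⟨u, v, hu, hv, hcu, hcv, huv⟩ := isOpen_prod_iff.1 hU c₁ c₂ hc
  obtain ⟨x, hxu, hx⟩ := (infinite_of_mem_nhds c₁ (hu.mem_nhds hcu)).exists_notMem_finset
    (S.image Prod.fst)
  let lineAt : (ℝ × ℝ) × (ℝ × ℝ) → ℝ := fun ⟨p, q⟩ =>
    p.2 + (x - p.1) * (q.2 - p.2) / (q.1 - p.1)
  obtain ⟨y, hyv, hy⟩ := (infinite_of_mem_nhds c₂ (hv.mem_nhds hcv)).exists_notMem_finset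
    ((S ×ˢ S).image lineAt)
  refine ⟨(x, y), huv ⟨hxu, hyv⟩, fun p hp hpx => hx (Finset.mem_image.2 ⟨p, hp, hpx⟩),
    fun p hp q hq hpq hcol => hy (Finset.mem_image.2 ⟨(p, q), Finset.mem_product.2 ⟨hp, hq⟩, ?_⟩)⟩
  have hcross := hcol.cross_eq
  have hqp : q.1 - p.1 ≠ 0 := sub_ne_zero.2 (Ne.symm hpq)
  simp only [lineAt]
  field_simp
  linear_combination -hcross

theorem exists_genPos2_image {ι : Type*} (s : Finset ι) (U : ι → Set (ℝ × ℝ))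
    (hU : ∀ i ∈ s, IsOpen (U i)) (hne : ∀ i ∈ s, (U i).Nonempty) :
    ∃ f : ι → ℝ × ℝ, (∀ i ∈ s, f i ∈ U i) ∧ Set.InjOn (fun i => (f i).1) s ∧
      GenPos2 (s.image f) := by
  induction s using Finset.induction_on with
  | empty => exact ⟨fun _ => 0, by simp, by simp, by simp [GenPos2]⟩
  | @insert a s ha ih =>
    obtain ⟨f, hfU, hfinj, hfgen⟩ := ih (fun i hi => hU i (Finset.mem_insert_of_mem hi))
      (fun i hi => hne i (Finset.mem_insert_of_mem hi))
    obtain ⟨z, hzU, hzx, hzcol⟩ := (hU a (Finset.mem_insert_self a s)).exists_mem_not_collinear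
      (hne a (Finset.mem_insert_self a s)) (s.image f)
    have hfs : ∀ i ∈ s, Function.update f a z i = f i := fun i hi =>
      Function.update_of_ne (ne_of_mem_of_not_mem hi ha) _ _
    refine ⟨Function.update f a z, fun i hi => ?_, ?_, ?_⟩
    · rcases Finset.mem_insert.1 hi with rfl | hi
      · simpa using hzU
      · rw [hfs i hi]; exact hfU i hi
    · rw [Finset.coe_insert, Set.injOn_insert (by simpa using ha)]
      refine ⟨fun i hi j hj hij => hfinj hi hj ?_, ?_⟩
      · simpa [hfs i hi, hfs j hj] using hij
      · rintro ⟨i, hi, hix⟩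
        simp only [Function.update_self, hfs i hi] at hix
        exact hzx (f i) (Finset.mem_image_of_mem f hi) hix
    · rw [Finset.image_insert, Function.update_self, Finset.image_congr hfs]
      refine genPos2_insert hfgen fun p hp q hq hpq => hzcol p hp q hq ?_
      obtain ⟨i, hi, rfl⟩ := Finset.mem_image.1 hp
      obtain ⟨j, hj, rfl⟩ := Finset.mem_image.1 hq
      exact fun h => hpq (congrArg f (hfinj hi hj h))

def aboveSet (a b : ℝ) : Set (ℝ × ℝ) := {p | a * p.1 + b < p.2}

lemma isOpen_belowSet (a b : ℝ) : IsOpen (belowSet a b) :=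
  isOpen_lt (by fun_prop) (by fun_prop)

lemma isOpen_aboveSet (a b : ℝ) : IsOpen (aboveSet a b) :=
  isOpen_lt (by fun_prop) (by fun_prop)

lemma mem_aboveSet_of_notMem {a b : ℝ} {p : ℝ × ℝ} (hline : p ∉ lineSet a b)
    (hbelow : p ∉ belowSet a b) : p ∈ aboveSet a b := by
  simp only [lineSet, belowSet, aboveSet, Set.mem_ofPred_eq, not_lt] at *
  exact lt_of_le_of_ne hbelow (Ne.symm hline)

lemma IsPreconnected.inter_lineSet_nonempty {T : Set (ℝ × ℝ)} (hT : IsPreconnected T) {a b : ℝ}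
    {p p' : ℝ × ℝ} (hp : p ∈ T) (hp' : p' ∈ T) (hbelow : p ∈ belowSet a b)
    (habove : p' ∈ aboveSet a b) : (lineSet a b ∩ T).Nonempty := by
  simp only [belowSet, aboveSet, Set.mem_ofPred_eq] at hbelow habove
  obtain ⟨z, hz, hz0⟩ := hT.intermediate_value hp hp'
    (f := fun z : ℝ × ℝ => z.2 - (a * z.1 + b)) (by fun_prop)
    (show (0 : ℝ) ∈ _ from ⟨by linarith, by linarith⟩)
  exact ⟨z, show z.2 = a * z.1 + b by linarith [hz0], hz⟩

def pathNodes (β l : ℕ) : Finset ℕ :=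
  (Finset.range (β + 1)).image fun t => l / 2 ^ t

section Tree

variable {β l v : ℕ}

lemma card_pathNodes_le : (pathNodes β l).card ≤ β + 1 :=
  Finset.card_image_le.trans (Finset.card_range _).le

lemma pathNodes_subset_treeNodes (hl : l ∈ treeLeaves β) : pathNodes β l ⊆ treeNodes β := by
  simp only [treeLeaves, treeNodes, Finset.mem_Ico, pathNodes, Finset.subset_iff,
    Finset.mem_image, Finset.mem_range] at hl ⊢
  rintro _ ⟨t, ht, rfl⟩
  have : 2 ^ t ≤ l := (Nat.pow_le_pow_right two_pos (by omega)).trans hl.1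
  exact ⟨(Nat.one_le_div_iff (by positivity)).2 this, (Nat.div_le_self _ _).trans_lt hl.2⟩

lemma mem_pathNodes_iff (hl : l ∈ treeLeaves β) :
    v ∈ pathNodes β l ↔
      v * 2 ^ (β - Nat.log 2 v) ≤ l ∧ l < v * 2 ^ (β - Nat.log 2 v) + 2 ^ (β - Nat.log 2 v) := by
  simp only [treeLeaves, Finset.mem_Ico] at hl
  have hlog : Nat.log 2 l = β := Nat.log_eq_of_pow_le_of_lt_pow hl.1 hl.2
  constructor
  · simp only [pathNodes, Finset.mem_image, Finset.mem_range]
    rintro ⟨t, ht, rfl⟩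
    rw [Nat.log_div_base_pow, hlog, Nat.sub_sub_self (by omega)]
    have := (Nat.div_eq_iff (x := l) (y := l / 2 ^ t) (by positivity : 0 < 2 ^ t)).1 rfl
    omega
  · intro h
    refine Finset.mem_image.2 ⟨β - Nat.log 2 v, Finset.mem_range.2 (by omega), ?_⟩
    exact (Nat.div_eq_iff (by positivity)).2 (by omega)

end Tree

lemma sq_two_mul_sub_add_one_lt_sq_iff {w : ℤ} (hw : 0 ≤ w) (m : ℤ) :
    (2 * m - w + 1) ^ 2 < w ^ 2 ↔ 0 ≤ m ∧ m < w := by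
  rw [← sub_neg, show (2 * m - w + 1) ^ 2 - w ^ 2 = (2 * m + 1) * (2 * m + 1 - 2 * w) by ring,
    mul_neg_iff]
  omega

lemma sq_lt_sq_two_mul_sub_add_one_iff {w : ℤ} (hw : 0 ≤ w) (m : ℤ) :
    w ^ 2 < (2 * m - w + 1) ^ 2 ↔ m < 0 ∨ w ≤ m := by
  rw [← sub_pos, show (2 * m - w + 1) ^ 2 - w ^ 2 = (2 * m + 1) * (2 * m + 1 - 2 * w) by ring,
    mul_pos_iff]
  omega

/-- With `w = 2^(β - log₂ v)`, the point `(x, x² - w²)` for `x = 2vw + w - 1` lies below the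
tangent `y = 4lx - 4l²` to the parabola `y = x²` at `x = 2l` exactly when
`|x - 2l| < w`, i.e. when the leaf `l` lies in the interval `[vw, vw + w)` of leaves below `v`. -/
def nodePoint (β v : ℕ) : ℝ × ℝ :=
  let w : ℕ := 2 ^ (β - Nat.log 2 v)
  let x : ℤ := 2 * v * w + w - 1
  (x, x ^ 2 - w ^ 2)

section NodePoint

variable {β l v : ℕ}

lemma nodePoint_mem_belowSet_iff (hl : l ∈ treeLeaves β) :
    nodePoint β v ∈ belowSet (4 * l) (-(4 * l ^ 2)) ↔ v ∈ pathNodes β l := by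
  rw [mem_pathNodes_iff hl]
  simp only [nodePoint, belowSet, Set.mem_ofPred_eq]
  set w : ℕ := 2 ^ (β - Nat.log 2 v)
  generalize hx : 2 * (v : ℤ) * w + w - 1 = x
  have e : 4 * (l : ℝ) * x + -(4 * l ^ 2) - ((x : ℝ) ^ 2 - (w : ℝ) ^ 2) =
      ((w ^ 2 - (2 * (l - v * w) - w + 1) ^ 2 : ℤ) : ℝ) := by
    rw [← hx]; push_cast; ring
  rw [← sub_pos, e, Int.cast_pos, sub_pos, sq_two_mul_sub_add_one_lt_sq_iff (by positivity)]
  omega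

lemma nodePoint_mem_aboveSet_iff (hl : l ∈ treeLeaves β) :
    nodePoint β v ∈ aboveSet (4 * l) (-(4 * l ^ 2)) ↔ v ∉ pathNodes β l := by
  rw [mem_pathNodes_iff hl]
  simp only [nodePoint, aboveSet, Set.mem_ofPred_eq]
  set w : ℕ := 2 ^ (β - Nat.log 2 v)
  generalize hx : 2 * (v : ℤ) * w + w - 1 = x
  have e : ((x : ℝ) ^ 2 - (w : ℝ) ^ 2) - (4 * (l : ℝ) * x + -(4 * l ^ 2)) =
      (((2 * (l - v * w) - w + 1) ^ 2 - w ^ 2 : ℤ) : ℝ) := by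
    rw [← hx]; push_cast; ring
  rw [← sub_pos, e, Int.cast_pos, sub_pos, sq_lt_sq_two_mul_sub_add_one_iff (by positivity)]
  omega

end NodePoint

def nodeRegion (β v : ℕ) : Set (ℝ × ℝ) :=
  ⋂ l ∈ treeLeaves β,
    if v ∈ pathNodes β l then belowSet (4 * l) (-(4 * l ^ 2)) else aboveSet (4 * l) (-(4 * l ^ 2))

section NodeRegion

variable {β l v : ℕ}

lemma isOpen_nodeRegion : IsOpen (nodeRegion β v) :=
  isOpen_biInter_finset fun l _ => by
    split_ifs
    exacts [isOpen_belowSet _ _, isOpen_aboveSet _ _]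

lemma nodePoint_mem_nodeRegion : nodePoint β v ∈ nodeRegion β v :=
  Set.mem_iInter₂.2 fun l hl => by
    split_ifs with h
    exacts [(nodePoint_mem_belowSet_iff hl).2 h, (nodePoint_mem_aboveSet_iff hl).2 h]

lemma notMem_lineSet_of_mem_nodeRegion {p : ℝ × ℝ} (hp : p ∈ nodeRegion β v)
    (hl : l ∈ treeLeaves β) : p ∉ lineSet (4 * l) (-(4 * l ^ 2)) := by
  have hside := Set.mem_iInter₂.1 hp l hl
  split_ifs at hside <;>
    simp only [lineSet, belowSet, aboveSet, Set.mem_ofPred_eq] at hside ⊢ <;> linarith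

lemma mem_belowSet_iff_of_mem_nodeRegion {p : ℝ × ℝ} (hp : p ∈ nodeRegion β v)
    (hl : l ∈ treeLeaves β) : p ∈ belowSet (4 * l) (-(4 * l ^ 2)) ↔ v ∈ pathNodes β l := by
  have hside := Set.mem_iInter₂.1 hp l hl
  split_ifs at hside with h <;>
    simp only [belowSet, aboveSet, Set.mem_ofPred_eq, h, iff_true, iff_false, not_lt] at hside ⊢ <;>
    linarith

end NodeRegion

theorem exists_injOn_genPos2_nodeRegion (β q : ℕ) :
    ∃ f : ℕ × ℕ → ℝ × ℝ, Set.InjOn f ↑(treeNodes β ×ˢ Finset.range q) ∧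
      GenPos2 ((treeNodes β ×ˢ Finset.range q).image f) ∧
      ∀ i ∈ treeNodes β ×ˢ Finset.range q, f i ∈ nodeRegion β i.1 := by
  obtain ⟨f, hf, hinj, hgen⟩ := exists_genPos2_image (treeNodes β ×ˢ Finset.range q)
    (fun i => nodeRegion β i.1) (fun _ _ => isOpen_nodeRegion)
    (fun _ _ => ⟨_, nodePoint_mem_nodeRegion⟩)
  exact ⟨f, Set.InjOn.of_comp (g := Prod.fst) hinj, hgen, hf⟩

lemma isShallow_image_of_mem_nodeRegion {β q k l : ℕ} {f : ℕ × ℕ → ℝ × ℝ}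
    (hf : ∀ i ∈ treeNodes β ×ˢ Finset.range q, f i ∈ nodeRegion β i.1)
    (hk : (β + 1) * q ≤ k) (hl : l ∈ treeLeaves β) :
    IsShallow ((treeNodes β ×ˢ Finset.range q).image f) k (4 * l) (-(4 * l ^ 2)) := by
  refine ⟨fun p hp => ?_, ?_⟩
  · obtain ⟨i, hi, rfl⟩ := Finset.mem_image.1 hp
    exact notMem_lineSet_of_mem_nodeRegion (hf i hi) hl
  · calc _ ≤ ((pathNodes β l ×ˢ Finset.range q).image f).card := by
          refine Finset.card_le_card fun p hp => ?_
          obtain ⟨hp, hbelow⟩ := Finset.mem_filter.1 hp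
          obtain ⟨i, hi, rfl⟩ := Finset.mem_image.1 hp
          refine Finset.mem_image_of_mem f (Finset.mem_product.2 ⟨?_, (Finset.mem_product.1 hi).2⟩)
          exact (mem_belowSet_iff_of_mem_nodeRegion (hf i hi) hl).1 hbelow
      _ ≤ (pathNodes β l).card * q :=
          Finset.card_image_le.trans (by rw [Finset.card_product, Finset.card_range])
      _ ≤ k := (Nat.mul_le_mul_right q card_pathNodes_le).trans hk

lemma Nat.add_sub_one_div_le_div_add_one (n k : ℕ) : (n + k - 1) / k ≤ n / k + 1 := by
  rcases Nat.eq_zero_or_pos k with rfl | hk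
  · simp
  · exact (Nat.div_le_div_right (by omega : n + k - 1 ≤ n + k)).trans
      (Nat.add_div_right n hk).le

lemma val_lt_div_of_ne {n k : ℕ} {i j : Fin ((n + k - 1) / k)} (hij : i ≠ j)
    (hj : n / k ≤ j) : (i : ℕ) < n / k := by
  have := Nat.add_sub_one_div_le_div_add_one n k
  have := Fin.val_ne_of_ne hij
  omega

lemma sum_count_map_range {α γ : Type*} [DecidableEq γ] (s : Finset α) (q : ℕ) (G : α × ℕ → γ)
    (b : γ) :
    ∑ v ∈ s, ((Finset.range q).val.map fun j => G (v, j)).count b =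
      ((s ×ˢ Finset.range q).filter fun i => G i = b).card := by
  rw [Finset.card_filter, Finset.sum_product]
  refine Finset.sum_congr rfl fun v _ => ?_
  rw [Multiset.count_map, ← Finset.filter_val, Finset.card_val, Finset.card_filter]
  simp only [eq_comm]

namespace IsKPartition

variable {P : Finset (ℝ × ℝ)} {n k : ℕ} {parts : Fin ((n + k - 1) / k) → Finset (ℝ × ℝ)}
  {tri : Fin ((n + k - 1) / k) → Fin 3 → ℝ × ℝ}

lemma subset (h : IsKPartition P n k parts tri) (i : Fin ((n + k - 1) / k)) : parts i ⊆ P :=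
  h.cover ▸ Finset.subset_biUnion_of_mem parts (Finset.mem_univ i)

lemma exists_mem (h : IsKPartition P n k parts tri) {p : ℝ × ℝ} (hp : p ∈ P) :
    ∃ i, p ∈ parts i := by
  rw [← h.cover] at hp
  simpa using hp

lemma exists_index (h : IsKPartition P n k parts tri) :
    ∃ g : ℝ × ℝ → ℕ, ∀ p ∈ P, ∃ i, p ∈ parts i ∧ (i : ℕ) = g p := by
  refine ⟨fun p => if hp : ∃ i, p ∈ parts i then hp.choose else 0, fun p hp => ?_⟩
  have hex := h.exists_mem hp
  exact ⟨hex.choose, hex.choose_spec, by simp only [dif_pos hex]⟩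

lemma sum_card (h : IsKPartition P n k parts tri) : ∑ i, (parts i).card = P.card := by
  rw [← h.cover, Finset.card_biUnion fun i _ j _ hij => h.disjoint i j hij]

lemma card_le (h : IsKPartition P n k parts tri) (hP : P.card = n)
    (i : Fin ((n + k - 1) / k)) : (parts i).card ≤ k := by
  by_cases hi : (i : ℕ) < n / k
  · exact (h.size i hi).le
  rw [not_lt] at hi
  have hk : 0 < k := Nat.pos_of_ne_zero fun hk => by simpa [hk] using i.isLt
  have hN : (n + k - 1) / k = n / k + 1 := by
    have := Nat.add_sub_one_div_le_div_add_one n k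
    have := i.isLt
    omega
  have hothers : ∑ j ∈ Finset.univ.erase i, (parts j).card = n / k * k := by
    rw [Finset.sum_congr rfl fun j hj => h.size j (val_lt_div_of_ne (Finset.ne_of_mem_erase hj) hi),
      Finset.sum_const, Finset.card_erase_of_mem (Finset.mem_univ _), Finset.card_univ,
      Fintype.card_fin, hN, smul_eq_mul, Nat.add_sub_cancel]
  have hsum := Finset.add_sum_erase Finset.univ (fun j => (parts j).card) (Finset.mem_univ i)
  rw [h.sum_card, hP, hothers] at hsum
  have := Nat.div_add_mod n k
  have := Nat.mod_lt n hk
  nlinarith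

lemma eq_of_subset (h : IsKPartition P n k parts tri) {B : Finset (ℝ × ℝ)} (hB : B.card ≤ k)
    {i j : Fin ((n + k - 1) / k)} (hi : (parts i).Nonempty) (hj : (parts j).Nonempty)
    (hiB : parts i ⊆ B) (hjB : parts j ⊆ B) : i = j := by
  by_contra hij
  have hsum : (parts i).card + (parts j).card ≤ k := by
    rw [← Finset.card_union_of_disjoint (h.disjoint i j hij)]
    exact (Finset.card_le_card (Finset.union_subset hiB hjB)).trans hB
  have := hi.card_pos
  have := hj.card_pos
  rcases lt_or_ge (i : ℕ) (n / k) with hi' | hi'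
  · have := h.size i hi'
    omega
  · have := h.size j (val_lt_div_of_ne (Ne.symm hij) hi')
    omega

lemma card_filter_eq_le (h : IsKPartition P n k parts tri) (hP : P.card = n) {g : ℝ × ℝ → ℕ}
    (hg : ∀ p ∈ P, ∃ i, p ∈ parts i ∧ (i : ℕ) = g p) (col : ℕ) :
    (P.filter fun p => g p = col).card ≤ k := by
  rcases (P.filter fun p => g p = col).eq_empty_or_nonempty with hempty | ⟨p₀, hp₀⟩
  · simp [hempty]
  obtain ⟨hp₀P, rfl⟩ := Finset.mem_filter.1 hp₀
  obtain ⟨i, -, hi⟩ := hg p₀ hp₀P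
  refine (Finset.card_le_card fun p hp => ?_).trans (h.card_le hP i)
  obtain ⟨hpP, hpg⟩ := Finset.mem_filter.1 hp
  obtain ⟨j, hj, hji⟩ := hg p hpP
  rwa [Fin.ext (hji.trans (hpg.trans hi.symm))] at hj

lemma sum_count_map_le (h : IsKPartition P n k parts tri) (hP : P.card = n) {s : Finset ℕ}
    {q : ℕ} {f : ℕ × ℕ → ℝ × ℝ} (hinj : Set.InjOn f ↑(s ×ˢ Finset.range q))
    (hf : ∀ i ∈ s ×ˢ Finset.range q, f i ∈ P) {g : ℝ × ℝ → ℕ}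
    (hg : ∀ p ∈ P, ∃ i, p ∈ parts i ∧ (i : ℕ) = g p) (col : ℕ) :
    ∑ v ∈ s, ((Finset.range q).val.map fun j => g (f (v, j))).count col ≤ k := by
  rw [sum_count_map_range s q (fun i => g (f i)) col]
  refine (Finset.card_le_card_of_injOn f (fun i hi => ?_)
    (hinj.mono (Finset.coe_subset.2 (Finset.filter_subset _ _)))).trans
    (h.card_filter_eq_le hP hg col)
  obtain ⟨hi, hcol⟩ := Finset.mem_filter.1 hi
  exact Finset.mem_filter.2 ⟨hf i hi, hcol⟩

/-- A part with a point below a shallow line either has its triangle crossed by the line or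
lies entirely below it; the latter happens for at most one part, as at most `k` points lie
below the line and all parts but the last one have `k` points. -/
lemma card_filter_exists_mem_belowSet_le (h : IsKPartition P n k parts tri) {a b : ℝ}
    (hs : IsShallow P k a b) :
    (Finset.univ.filter fun i => ∃ p ∈ parts i, p ∈ belowSet a b).card ≤
      crossCount tri a b + 1 := by
  set B := P.filter fun p => p ∈ belowSet a b
  have hsub : (Finset.univ.filter fun i => ∃ p ∈ parts i, p ∈ belowSet a b) ⊆
      (Finset.univ.filter fun i => (lineSet a b ∩ triangle (tri i)).Nonempty) ∪
        Finset.univ.filter fun i => (parts i).Nonempty ∧ parts i ⊆ B := by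
    intro i hi
    obtain ⟨p, hp, hpb⟩ := (Finset.mem_filter.1 hi).2
    by_cases hcross : (lineSet a b ∩ triangle (tri i)).Nonempty
    · exact Finset.mem_union_left _ (Finset.mem_filter.2 ⟨Finset.mem_univ i, hcross⟩)
    refine Finset.mem_union_right _ (Finset.mem_filter.2 ⟨Finset.mem_univ i, ⟨p, hp⟩,
      fun p' hp' => Finset.mem_filter.2 ⟨h.subset i hp', ?_⟩⟩)
    by_contra hp'b
    exact hcross ((convex_convexHull ℝ _).isPreconnected.inter_lineSet_nonempty
      (h.inTriangle i hp) (h.inTriangle i hp') hpb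
      (mem_aboveSet_of_notMem (hs.1 p' (h.subset i hp')) hp'b))
  have hone : (Finset.univ.filter fun i => (parts i).Nonempty ∧ parts i ⊆ B).card ≤ 1 :=
    Finset.card_le_one.2 fun i hi j hj =>
      h.eq_of_subset hs.2 (Finset.mem_filter.1 hi).2.1 (Finset.mem_filter.1 hj).2.1
        (Finset.mem_filter.1 hi).2.2 (Finset.mem_filter.1 hj).2.2
  exact (Finset.card_le_card hsub).trans
    ((Finset.card_union_le _ _).trans (Nat.add_le_add_left hone _))

end IsKPartition

lemma pathColors_subset_image_filter {β q l N : ℕ} {f : ℕ × ℕ → ℝ × ℝ}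
    (hf : ∀ i ∈ treeNodes β ×ˢ Finset.range q, f i ∈ nodeRegion β i.1) (hl : l ∈ treeLeaves β)
    {parts : Fin N → Finset (ℝ × ℝ)} {g : ℝ × ℝ → ℕ}
    (hg : ∀ i ∈ treeNodes β ×ˢ Finset.range q, ∃ j, f i ∈ parts j ∧ (j : ℕ) = g (f i)) :
    pathColors β (fun v => (Finset.range q).val.map fun j => g (f (v, j))) l ⊆
      (Finset.univ.filter fun i => ∃ p ∈ parts i, p ∈ belowSet (4 * l) (-(4 * l ^ 2))).image
        Fin.val := by
  intro col hcol
  simp only [pathColors, Finset.mem_biUnion, Finset.mem_range, Multiset.mem_toFinset,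
    Multiset.mem_map, Finset.mem_val] at hcol
  obtain ⟨t, ht, j, hj, rfl⟩ := hcol
  have hv : l / 2 ^ t ∈ pathNodes β l := Finset.mem_image_of_mem _ (Finset.mem_range.2 ht)
  have hi : (l / 2 ^ t, j) ∈ treeNodes β ×ˢ Finset.range q :=
    Finset.mem_product.2 ⟨pathNodes_subset_treeNodes hl hv, Finset.mem_range.2 hj⟩
  obtain ⟨i, hpi, hig⟩ := hg _ hi
  exact Finset.mem_image.2 ⟨i, Finset.mem_filter.2 ⟨Finset.mem_univ i, _, hpi,
    (mem_belowSet_iff_of_mem_nodeRegion (hf _ hi) hl).2 hv⟩, hig⟩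

theorem statement3_general (β k A : ℕ)
    (hA : ∀ P : Finset (ℝ × ℝ),
      P.card = (2 * 2 ^ β - 1) * (k / (β + 1)) → GenPos2 P →
      ∃ (parts : Fin (((2 * 2 ^ β - 1) * (k / (β + 1)) + k - 1) / k) → Finset (ℝ × ℝ))
        (tri : Fin (((2 * 2 ^ β - 1) * (k / (β + 1)) + k - 1) / k) → Fin 3 → ℝ × ℝ),
        IsKPartition P ((2 * 2 ^ β - 1) * (k / (β + 1))) k parts tri ∧
          ∀ a b : ℝ, IsShallow P k a b → crossCount tri a b ≤ A) :
    ∃ c : ℕ → Multiset ℕ,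
      (∀ v ∈ treeNodes β, Multiset.card (c v) = k / (β + 1)) ∧
      (∀ col : ℕ, (∑ v ∈ treeNodes β, (c v).count col) ≤ k) ∧
      (∀ l ∈ treeLeaves β, (pathColors β c l).card ≤ A + 1) := by
  set q := k / (β + 1)
  obtain ⟨f, hinj, hgen, hregion⟩ := exists_injOn_genPos2_nodeRegion β q
  set P := (treeNodes β ×ˢ Finset.range q).image f
  have hfP : ∀ i ∈ treeNodes β ×ˢ Finset.range q, f i ∈ P := fun _ => Finset.mem_image_of_mem f
  have hcard : P.card = (2 * 2 ^ β - 1) * q := by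
    rw [Finset.card_image_of_injOn hinj, Finset.card_product, Finset.card_range, treeNodes,
      Nat.card_Ico, pow_succ, mul_comm (2 ^ β)]
  obtain ⟨parts, tri, hpart, hcross⟩ := hA P hcard hgen
  obtain ⟨g, hg⟩ := hpart.exists_index
  refine ⟨fun v => (Finset.range q).val.map fun j => g (f (v, j)), fun v _ => by simp,
    hpart.sum_count_map_le hcard hinj hfP hg, fun l hl => ?_⟩
  have hshallow : IsShallow P k (4 * l) (-(4 * l ^ 2)) :=
    isShallow_image_of_mem_nodeRegion hregion (Nat.mul_div_le k (β + 1)) hl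
  calc _ ≤ _ := Finset.card_le_card
        (pathColors_subset_image_filter hregion hl fun i hi => hg _ (hfP i hi))
    _ ≤ _ := Finset.card_image_le
    _ ≤ crossCount tri (4 * l) (-(4 * l ^ 2)) + 1 :=
      hpart.card_filter_exists_mem_belowSet_le hshallow
    _ ≤ A + 1 := Nat.add_le_add_right (hcross _ _ hshallow) 1

/-- shallow partitions yield tree multi-colorings.
Let `m = 2^β`, let `k` be a multiple of `β + 1`, and set
`n = (2m - 1) · k/(β+1)`.  If `A` is such that every `n`-point planar set in
general position admits a `k`-partition with crossing number at most `A`,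
then the complete binary tree of height `β` has a multi-coloring in which
every node carries exactly `k/(β+1)` colors, every color class has size at
most `k`, and every root-leaf path meets at most `A + 1` distinct colors. -/
theorem statement3 (β k A : ℕ) (hk : (β + 1) ∣ k)
    (hA : ∀ P : Finset (ℝ × ℝ),
      P.card = (2 * 2 ^ β - 1) * (k / (β + 1)) → GenPos2 P →
      ∃ (parts : Fin (((2 * 2 ^ β - 1) * (k / (β + 1)) + k - 1) / k) → Finset (ℝ × ℝ))
        (tri : Fin (((2 * 2 ^ β - 1) * (k / (β + 1)) + k - 1) / k) → Fin 3 → ℝ × ℝ),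
        IsKPartition P ((2 * 2 ^ β - 1) * (k / (β + 1))) k parts tri ∧
          ∀ a b : ℝ, IsShallow P k a b → crossCount tri a b ≤ A) :
    ∃ c : ℕ → Multiset ℕ,
      (∀ v ∈ treeNodes β, Multiset.card (c v) = k / (β + 1)) ∧
      (∀ col : ℕ, (∑ v ∈ treeNodes β, (c v).count col) ≤ k) ∧
      (∀ l ∈ treeLeaves β, (pathColors β c l).card ≤ A + 1) :=
  statement3_general β k A hA
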